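/- arXiv:0901.3189 — 2 statements merged into one kernel-verified Lean document; each statement's English description precedes it below -/
import Mathlib

section
/- Let p be a prime. For all i with 0 < i < p, a·M[i, p−1] + b·M[i−1, p−1] ≡ 0 (mod p). -/
/-! The column generating functions `Gⱼ(x) = ∑ᵢ M[i,j] xⁱ` satisfy `(1 - c x) G₀ = 1` and
`(1 - c x) Gⱼ₊₁ = (a + b x) Gⱼ`, hence `(1 - c x)ᵖ (a + b x) Gₚ₋₁ = (a + b x)ᵖ`. In characteristic `p`
the Frobenius turns this into `(1 - cᵖ xᵖ) (a + b x) Gₚ₋₁ = aᵖ + bᵖ xᵖ`, and the coefficient of `xⁱ`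
for `0 < i < p` reads `a M[i,p-1] + b M[i-1,p-1] = 0`. -/

/-- The matrix `M` from Definition 4.1: `M[0,0] = 1`, `M[0,j] = a^j` for `j > 0`,
`M[i,0] = c^i` for `i > 0`, and `M[i,j] = a*M[i,j-1] + b*M[i-1,j-1] + c*M[i-1,j]`
for `i, j > 0`. -/
def M (a b c : ℕ) : ℕ → ℕ → ℕ
  | 0, 0 => 1
  | 0, j + 1 => a ^ (j + 1)
  | i + 1, 0 => c ^ (i + 1)
  | i + 1, j + 1 =>
      a * M a b c (i + 1) j + b * M a b c i j + c * M a b c i (j + 1)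
  termination_by i j => i + j

@[simp]
theorem M_zero_left (a b c j : ℕ) : M a b c 0 j = a ^ j := by
  cases j <;> simp [M]

@[simp]
theorem M_zero_right (a b c i : ℕ) : M a b c i 0 = c ^ i := by
  cases i <;> simp [M]

namespace PowerSeries

instance charP {R : Type*} [Semiring R] (p : ℕ) [CharP R p] : CharP R⟦X⟧ p :=
  charP_of_injective_ringHom (C_injective (R := R)) p

section Ring

variable {R : Type*} [Ring R]

theorem coeff_succ_one_sub_C_mul_X_mul (r : R) (f : R⟦X⟧) (n : ℕ) :
    coeff (n + 1) ((1 - C r * X) * f) = coeff (n + 1) f - r * coeff n f := by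
  rw [sub_mul, one_mul, mul_assoc, map_sub, coeff_C_mul, coeff_succ_X_mul]

theorem coeff_succ_C_add_C_mul_X_mul (r s : R) (f : R⟦X⟧) (n : ℕ) :
    coeff (n + 1) ((C r + C s * X) * f) = r * coeff (n + 1) f + s * coeff n f := by
  rw [add_mul, mul_assoc, map_add, coeff_C_mul, coeff_C_mul, coeff_succ_X_mul]

theorem coeff_one_sub_C_mul_X_pow_mul_of_lt (r : R) (f : R⟦X⟧) {n i : ℕ} (hi : i < n) :
    coeff i ((1 - C r * X ^ n) * f) = coeff i f := by
  rw [sub_mul, one_mul, mul_assoc, map_sub, coeff_C_mul, coeff_X_pow_mul', if_neg hi.not_ge,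
    mul_zero, sub_zero]

end Ring

end PowerSeries

open PowerSeries

namespace M

variable (R : Type*) [CommRing R]

def columnSeries (a b c j : ℕ) : R⟦X⟧ :=
  mk fun i => (M a b c i j : R)

variable {R}

@[simp]
theorem coeff_columnSeries (a b c i j : ℕ) : coeff i (columnSeries R a b c j) = M a b c i j :=
  coeff_mk _ _

theorem one_sub_mul_columnSeries_zero (a b c : ℕ) :
    (1 - C (c : R) * X) * columnSeries R a b c 0 = 1 := by
  ext (_ | n)
  · simp [columnSeries]
  · rw [coeff_succ_one_sub_C_mul_X_mul]
    simp [pow_succ, mul_comm]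

theorem one_sub_mul_columnSeries_succ (a b c j : ℕ) :
    (1 - C (c : R) * X) * columnSeries R a b c (j + 1) =
      (C (a : R) + C (b : R) * X) * columnSeries R a b c j := by
  ext (_ | n)
  · simp [columnSeries, pow_succ, mul_comm]
  · rw [coeff_succ_one_sub_C_mul_X_mul, coeff_succ_C_add_C_mul_X_mul]
    simp only [coeff_columnSeries]
    rw [M]
    push_cast
    ring

theorem one_sub_pow_mul_columnSeries (a b c j : ℕ) :
    (1 - C (c : R) * X) ^ (j + 1) * columnSeries R a b c j = (C (a : R) + C (b : R) * X) ^ j := by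
  induction j with
  | zero => rw [zero_add, pow_one, pow_zero, one_sub_mul_columnSeries_zero]
  | succ j ih =>
    rw [pow_succ, mul_assoc, one_sub_mul_columnSeries_succ, mul_left_comm, ih, pow_succ']

theorem add_mul_succ_add_mul_eq_zero_of_charP (p : ℕ) [Fact p.Prime] [CharP R p] (a b c : ℕ)
    {i : ℕ} (hi : i + 1 < p) :
    (a : R) * M a b c (i + 1) (p - 1) + b * M a b c i (p - 1) = 0 := by
  have hp : p - 1 + 1 = p := Nat.sub_add_cancel (Fact.out : p.Prime).one_le
  set A : R⟦X⟧ := C (a : R) + C (b : R) * X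
  have frobenius_identity :
      (1 - C ((c : R) ^ p) * X ^ p) * (A * columnSeries R a b c (p - 1)) =
        C ((a : R) ^ p) + C ((b : R) ^ p) * X ^ p :=
    calc _ = A * ((1 - C (c : R) * X) ^ (p - 1 + 1) * columnSeries R a b c (p - 1)) := by
          rw [hp, sub_pow_char, one_pow, mul_pow, ← map_pow]
          ring
      _ = A ^ p := by rw [one_sub_pow_mul_columnSeries, ← pow_succ', hp]
      _ = _ := by rw [add_pow_char, mul_pow, ← map_pow, ← map_pow]
  have := congrArg (coeff (i + 1)) frobenius_identity
  rwa [coeff_one_sub_C_mul_X_pow_mul_of_lt _ _ hi, coeff_succ_C_add_C_mul_X_mul, map_add, coeff_C,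
    coeff_C_mul_X_pow, if_neg i.succ_ne_zero, if_neg hi.ne, add_zero, coeff_columnSeries,
    coeff_columnSeries] at this

end M

/-- Lemma 4.11(a) (sum lemma): for `p` prime and `0 < i < p`,
`a·M[i, p-1] + b·M[i-1, p-1] ≡ 0` modulo `p`. -/
theorem M_sum_row (p a b c : ℕ) (hp : p.Prime) :
    ∀ i : ℕ, 0 < i → i < p →
      a * M a b c i (p - 1) + b * M a b c (i - 1) (p - 1) ≡ 0 [MOD p] := by
  have := Fact.mk hp
  rintro (_ | i) hi hip
  · exact absurd hi (lt_irrefl 0)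
  rw [← ZMod.natCast_eq_natCast_iff, Nat.add_sub_cancel]
  exact_mod_cast M.add_mul_succ_add_mul_eq_zero_of_charP (R := ZMod p) p a b c hip
end

section
/- Let p be a prime, let i > 0 and x ≥ 0 be natural numbers, let m > 0, and set n = M[i, x]. Suppose that for all j with 0 < j < m, b·M[i−1, x+j−1] + c·M[i−1, x+j] ≡ 0 (mod p). Then for all j with 0 ≤ j < m, M[i, x+j] ≡ n · a^j (mod p). -/
theorem Nat.modEq_mul_pow_of_succ_modEq_mul {p a m : ℕ} {f : ℕ → ℕ}
    (h : ∀ j, j + 1 < m → f (j + 1) ≡ a * f j [MOD p]) :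
    ∀ j < m, f j ≡ f 0 * a ^ j [MOD p] := by
  intro j hj
  induction j with
  | zero => simp [Nat.ModEq.refl]
  | succ j ih =>
    calc f (j + 1) ≡ a * f j [MOD p] := h j hj
      _ ≡ a * (f 0 * a ^ j) [MOD p] := (ih (by omega)).mul_left a
      _ = f 0 * a ^ (j + 1) := by ring

theorem M_succ_succ (a b c i j : ℕ) :
    M a b c (i + 1) (j + 1) =
      a * M a b c (i + 1) j + (b * M a b c i j + c * M a b c i (j + 1)) := by
  rw [M, add_assoc]

theorem M_succ_succ_modEq {p a b c i j : ℕ}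
    (h : b * M a b c i j + c * M a b c i (j + 1) ≡ 0 [MOD p]) :
    M a b c (i + 1) (j + 1) ≡ a * M a b c (i + 1) j [MOD p] := by
  rw [M_succ_succ]
  simpa using (Nat.ModEq.refl (a * M a b c (i + 1) j)).add h

theorem M_adjacent_column_a_general (p a b c : ℕ) (i x m n : ℕ)
    (hi : 0 < i) (hn : n = M a b c i x)
    (hyp : ∀ j : ℕ, 0 < j → j < m →
      b * M a b c (i - 1) (x + j - 1) + c * M a b c (i - 1) (x + j) ≡ 0 [MOD p]) :
    ∀ j : ℕ, j < m → M a b c i (x + j) ≡ n * a ^ j [MOD p] := by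
  obtain ⟨k, rfl⟩ : ∃ k, i = k + 1 := ⟨i - 1, by omega⟩
  subst hn
  refine Nat.modEq_mul_pow_of_succ_modEq_mul (f := fun j => M a b c (k + 1) (x + j)) fun j hj => ?_
  have hcol := hyp (j + 1) j.succ_pos hj
  simp only [Nat.add_sub_cancel, ← add_assoc] at hcol ⊢
  exact M_succ_succ_modEq hcol

/-- Lemma 4.12(a) (adjacent column lemma): fix a row `i > 0` and a column `x`, and let
`n = M[i, x]`.  If for all `0 < j < m` we have
`b·M[i-1, x+j-1] + c·M[i-1, x+j] ≡ 0 (mod p)`, then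
`M[i, x+j] ≡ n · a^j (mod p)` for all `j < m`. -/
theorem M_adjacent_column_a (p a b c : ℕ) (hp : p.Prime) (i x m n : ℕ)
    (hi : 0 < i) (hm : 0 < m) (hn : n = M a b c i x)
    (hyp : ∀ j : ℕ, 0 < j → j < m →
      b * M a b c (i - 1) (x + j - 1) + c * M a b c (i - 1) (x + j) ≡ 0 [MOD p]) :
    ∀ j : ℕ, j < m → M a b c i (x + j) ≡ n * a ^ j [MOD p] :=
  M_adjacent_column_a_general p a b c i x m n hi hn hyp
end
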